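/- Let θ > 0, ρ > 0, and λ ∈ (0,1). For every t > 0, the ρ-th power of the reduced GTLD density satisfies (θ e^{−t}(1 − e^{−t})^{θ−1}(1 + λ − 2λ(1 − e^{−t})^θ))^ρ = Σ_{j=0}^∞ θ^ρ (−1)^j C(ρ,j) (2λ)^j (1+λ)^{ρ−j} · Σ_{k=0}^∞ (−1)^k C(jθ + ρ(θ−1), k) · e^{−(k+ρ)t} (iterated sums; both the inner and outer series converge). With t = β g(x)^α this is the expansion f(x)^ρ = Σ_{j,k} w_{j,k} e^{−(k+ρ)β g(x)^α} (αβ g(x)^{α−1} g′(x))^ρ used for the Rényi entropy of the GTLD. -/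

import Mathlib

/-! Both series are generalized binomial series `(1 + x) ^ a = Σ C(a,k) x^k` (`|x| < 1`).
With `u = e^{-t}` and `v = (1 - u)^θ`, the inner series sums to
`(1 - u)^{jθ + ρ(θ-1)} e^{-ρt} = v^j (1 - u)^{ρ(θ-1)} e^{-ρt}`, and the outer series is then
`(1 + λ - 2λv)^ρ` expanded in powers of `-2λv`, which converges because `2λv < 1 + λ`. -/

open Real

/-- Generalized binomial coefficient `C(a,k) = a(a−1)⋯(a−k+1)/k!`. -/
noncomputable def genChoose (a : ℝ) (k : ℕ) : ℝ :=
  (∏ i ∈ Finset.range k, (a - i)) / (Nat.factorial k)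

theorem genChoose_eq_ringChoose (a : ℝ) (k : ℕ) : genChoose a k = Ring.choose a k := by
  rw [genChoose, Ring.choose_eq_smul, ← Polynomial.aeval_eq_smeval, Polynomial.aeval_def,
    Polynomial.eval₂_eq_eval_map, descPochhammer_map, descPochhammer_eval_eq_prod_range,
    smul_eq_mul, div_eq_inv_mul]

theorem hasSum_genChoose_mul_pow (a : ℝ) {x : ℝ} (hx : |x| < 1) :
    HasSum (fun k ↦ genChoose a k * x ^ k) ((1 + x) ^ a) := by
  have h := (one_add_rpow_hasFPowerSeriesOnBall_zero (a := a)).hasSum (y := x)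
    (by simpa [edist_dist, Real.dist_eq] using hx)
  simpa [binomialSeries, FormalMultilinearSeries.ofScalars_apply_eq, genChoose_eq_ringChoose,
    mul_comm] using h

theorem hasSum_genChoose_mul_pow_mul_rpow_sub (a : ℝ) {b c : ℝ} (hcb : |c| < b) :
    HasSum (fun k ↦ genChoose a k * c ^ k * b ^ (a - k)) ((b + c) ^ a) := by
  have hb : 0 < b := (abs_nonneg c).trans_lt hcb
  have hx : |c / b| < 1 := by rwa [abs_div, abs_of_pos hb, div_lt_one hb]
  have h := (hasSum_genChoose_mul_pow a hx).mul_left (b ^ a)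
  have h1x : 0 ≤ 1 + c / b := by linarith [neg_abs_le (c / b)]
  rw [← mul_rpow hb.le h1x, mul_add, mul_one, mul_div_cancel₀ c hb.ne'] at h
  refine h.congr_fun fun k ↦ ?_
  rw [rpow_sub hb, rpow_natCast, div_pow]
  field_simp

theorem hasSum_neg_one_pow_mul_genChoose_mul_exp (a ρ : ℝ) {t : ℝ} (ht : 0 < t) :
    HasSum (fun k : ℕ ↦ (-1) ^ k * genChoose a k * exp (-(k + ρ) * t))
      ((1 - exp (-t)) ^ a * exp (-(ρ * t))) := by
  have hx : |-exp (-t)| < 1 := by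
    rw [abs_neg, abs_of_pos (exp_pos _), exp_lt_one_iff]; linarith
  have h := (hasSum_genChoose_mul_pow a hx).mul_right (exp (-(ρ * t)))
  rw [← sub_eq_add_neg] at h
  refine h.congr_fun fun k ↦ ?_
  have hexp : exp (-(k + ρ) * t) = exp (-t) ^ k * exp (-(ρ * t)) := by
    rw [← exp_nat_mul, ← exp_add]; ring_nf
  rw [hexp, neg_pow (exp (-t))]
  ring

theorem gtld_density_power_expansion (θ ρ lam t : ℝ)
    (hθ : 0 < θ) (hlam : lam ∈ Set.Ioo (0 : ℝ) 1) (ht : 0 < t) :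
    (∀ j : ℕ,
        Summable (fun k : ℕ =>
          (-1 : ℝ) ^ k * genChoose ((j : ℝ) * θ + ρ * (θ - 1)) k *
            Real.exp (-((k : ℝ) + ρ) * t))) ∧
      HasSum
        (fun j : ℕ =>
          θ ^ ρ * (-1 : ℝ) ^ j * genChoose ρ j * (2 * lam) ^ j *
            (1 + lam) ^ (ρ - (j : ℝ)) *
            ∑' k : ℕ,
              (-1 : ℝ) ^ k * genChoose ((j : ℝ) * θ + ρ * (θ - 1)) k *
                Real.exp (-((k : ℝ) + ρ) * t))
        ((θ * Real.exp (-t) * (1 - Real.exp (-t)) ^ (θ - 1) *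
            (1 + lam - 2 * lam * (1 - Real.exp (-t)) ^ θ)) ^ ρ) := by
  obtain ⟨hlam0, hlam1⟩ := hlam
  have hinner (j : ℕ) :=
    hasSum_neg_one_pow_mul_genChoose_mul_exp ((j : ℝ) * θ + ρ * (θ - 1)) ρ ht
  refine ⟨fun j ↦ (hinner j).summable, ?_⟩
  set u := exp (-t)
  have h1u : 0 < 1 - u := by rw [sub_pos, exp_lt_one_iff]; linarith
  set v := (1 - u) ^ θ with hv
  have hv1 : v < 1 := rpow_lt_one h1u.le (by linarith [exp_pos (-t)]) hθ
  have hcb : |-(2 * lam * v)| < 1 + lam := by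
    rw [abs_neg, abs_of_pos (by positivity)]; nlinarith
  have hdensity : (θ * u * (1 - u) ^ (θ - 1) * (1 + lam - 2 * lam * v)) ^ ρ
      = θ ^ ρ * exp (-(ρ * t)) * (1 - u) ^ (ρ * (θ - 1)) * (1 + lam + -(2 * lam * v)) ^ ρ := by
    have hu_rpow : u ^ ρ = exp (-(ρ * t)) := by rw [← exp_mul]; ring_nf
    rw [← sub_eq_add_neg, mul_rpow (by positivity) (by linarith [neg_abs_le (-(2 * lam * v))]),
      mul_rpow (by positivity) (by positivity), mul_rpow hθ.le (exp_pos _).le, hu_rpow,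
      ← rpow_mul h1u.le, mul_comm (θ - 1) ρ]
  rw [hdensity]
  refine ((hasSum_genChoose_mul_pow_mul_rpow_sub ρ hcb).mul_left _).congr_fun fun j ↦ ?_
  rw [(hinner j).tsum_eq, rpow_add h1u, mul_comm (j : ℝ) θ, rpow_mul h1u.le, rpow_natCast, ← hv,
    neg_pow (2 * lam * v)]
  ring
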